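/- Let X be a Busemann space and let c, d : [0,∞) → X be asymptotic geodesic rays with Busemann functions β_c, β_d. Then 0 ≤ β_c(d(0)) + β_d(c(0)) ≤ 2·ρ_ξ(c,d), where ρ_ξ(c,d) = inf_{s,t ≥ 0} d(c(s), d(t)). -/

import Mathlib

open Filter

/-!
Upper bound: `β_c(d 0) ≤ t + d(d t, c s) - s` and `β_d(c 0) ≤ s + d(c s, d t) - t` by the triangle
inequality, and the two add up to `2 d(c s, d t)`.

Lower bound: in a Busemann space `u ↦ d(d u, c (u + t))` is midpoint convex, and it is bounded
because the rays are asymptotic; a bounded convex function on `[0, ∞)` is maximal at `0`, so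
`d(d s, c (s + t)) ≤ d(d 0, c t)`. The triangle inequality through `d s` then gives
`t - d(d 0, c t) ≤ d(c 0, d s) - s`, and letting `s, t → ∞` yields `-β_d(c 0) ≤ β_c(d 0)`.
-/

lemma le_apply_zero_of_midpoint_convex_of_bddAbove {ψ : ℝ → ℝ} {M : ℝ}
    (hbdd : ∀ u : ℝ, 0 ≤ u → ψ u ≤ M)
    (hconv : ∀ u v : ℝ, 0 ≤ u → 0 ≤ v → ψ ((u + v) / 2) ≤ (ψ u + ψ v) / 2)
    {s : ℝ} (hs : 0 ≤ s) : ψ s ≤ ψ 0 := by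
  by_contra! h
  have hgrowth : ∀ n : ℕ, ψ 0 + 2 ^ n * (ψ s - ψ 0) ≤ ψ (2 ^ n * s) := by
    intro n
    induction n with
    | zero => simp
    | succ n ih =>
      have hmid := hconv 0 (2 ^ (n + 1) * s) le_rfl (by positivity)
      rw [show (0 + 2 ^ (n + 1) * s) / 2 = 2 ^ n * s by ring] at hmid
      rw [pow_succ] at hmid ⊢
      linarith
  obtain ⟨n, hn⟩ := pow_unbounded_of_one_lt ((M - ψ 0) / (ψ s - ψ 0)) (one_lt_two (α := ℝ))
  rw [div_lt_iff₀ (by linarith)] at hn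
  linarith [hgrowth n, hbdd (2 ^ n * s) (by positivity)]

section Busemann

variable {X : Type*} [MetricSpace X]

def IsMidpoint (x y m : X) : Prop :=
  dist x m = dist x y / 2 ∧ dist m y = dist x y / 2

lemma IsMidpoint.symm {x y m : X} (h : IsMidpoint x y m) : IsMidpoint y x m := by
  unfold IsMidpoint at *
  rw [dist_comm y m, dist_comm y x, dist_comm m x]
  exact h.symm

def IsBusemannConvex (X : Type*) [MetricSpace X] : Prop :=
  ∀ x y z m n : X, IsMidpoint x y m → IsMidpoint x z n → dist m n ≤ dist y z / 2

def IsGeodesicRay (c : ℝ → X) : Prop :=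
  ∀ s t : ℝ, 0 ≤ s → 0 ≤ t → dist (c s) (c t) = |s - t|

/-- The general Busemann inequality, obtained from the one-apex version through a midpoint of
`x` and `y'`. -/
lemma IsBusemannConvex.dist_le {x y x' y' m m' : X}
    (hgeo : ∀ x y : X, ∃ m : X, IsMidpoint x y m) (hconv : IsBusemannConvex X)
    (hm : IsMidpoint x y m) (hm' : IsMidpoint x' y' m') :
    dist m m' ≤ (dist x x' + dist y y') / 2 := by
  obtain ⟨p, hp⟩ := hgeo x y'
  have h₁ : dist m p ≤ dist y y' / 2 := hconv x y y' m p hm hp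
  have h₂ : dist m' p ≤ dist x' x / 2 := hconv y' x' x m' p hm'.symm hp.symm
  linarith [dist_triangle_right m m' p, dist_comm x' x]

namespace IsGeodesicRay

variable {c : ℝ → X}

lemma dist_zero (hc : IsGeodesicRay c) {t : ℝ} (ht : 0 ≤ t) : dist (c 0) (c t) = t := by
  rw [hc 0 t le_rfl ht, zero_sub, abs_neg, abs_of_nonneg ht]

lemma dist_of_le (hc : IsGeodesicRay c) {s t : ℝ} (hs : 0 ≤ s) (hst : s ≤ t) :
    dist (c s) (c t) = t - s := by
  rw [hc s t hs (hs.trans hst), abs_sub_comm, abs_of_nonneg (sub_nonneg.2 hst)]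

lemma isMidpoint (hc : IsGeodesicRay c) {u v : ℝ} (hu : 0 ≤ u) (hv : 0 ≤ v) :
    IsMidpoint (c u) (c v) (c ((u + v) / 2)) := by
  have hw : 0 ≤ (u + v) / 2 := by positivity
  refine ⟨?_, ?_⟩
  · rw [hc _ _ hu hw, hc _ _ hu hv, show u - (u + v) / 2 = (u - v) / 2 by ring, abs_div,
      abs_two]
  · rw [hc _ _ hw hv, hc _ _ hu hv, show (u + v) / 2 - v = (u - v) / 2 by ring, abs_div,
      abs_two]

/-- Along a ray, `t ↦ dist y (c t) - t` is antitone, so its limit `β_c(y)` bounds it below. -/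
lemma busemann_le (hc : IsGeodesicRay c) {y : X} {β : ℝ}
    (hβ : Tendsto (fun t : ℝ => dist y (c t) - t) atTop (nhds β)) {t : ℝ} (ht : 0 ≤ t) :
    β ≤ dist y (c t) - t := by
  refine le_of_tendsto hβ ?_
  filter_upwards [eventually_ge_atTop t] with t' ht'
  linarith [dist_triangle y (c t) (c t'), hc.dist_of_le ht ht']

lemma busemann_add_busemann_le {d : ℝ → X} (hc : IsGeodesicRay c) (hd : IsGeodesicRay d)
    {βcd βdc : ℝ} (hβcd : Tendsto (fun t : ℝ => dist (d 0) (c t) - t) atTop (nhds βcd))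
    (hβdc : Tendsto (fun t : ℝ => dist (c 0) (d t) - t) atTop (nhds βdc))
    {s t : ℝ} (hs : 0 ≤ s) (ht : 0 ≤ t) : βcd + βdc ≤ 2 * dist (c s) (d t) := by
  linarith [hc.busemann_le hβcd hs, hd.busemann_le hβdc ht, dist_triangle (d 0) (d t) (c s),
    dist_triangle (c 0) (c s) (d t), hd.dist_zero ht, hc.dist_zero hs, dist_comm (d t) (c s)]

variable {d : ℝ → X}

lemma dist_shift_le_add_of_asymptotic (hc : IsGeodesicRay c) (hd : IsGeodesicRay d) {C : ℝ}
    (hC : ∀ u : ℝ, 0 ≤ u → ∃ s : ℝ, 0 ≤ s ∧ dist (d u) (c s) ≤ C)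
    {t u : ℝ} (ht : 0 ≤ t) (hu : 0 ≤ u) :
    dist (d u) (c (u + t)) ≤ 2 * C + dist (c 0) (d 0) + t := by
  obtain ⟨s, hs, hds⟩ := hC u hu
  have hsu : |s - u| ≤ dist (c 0) (d 0) + C := by
    have := dist_dist_dist_le (c 0) (c s) (d 0) (d u)
    rw [hc.dist_zero hs, hd.dist_zero hu, Real.dist_eq, dist_comm (c s)] at this
    linarith
  have hcs : dist (c s) (c (u + t)) ≤ |s - u| + t := by
    rw [hc s (u + t) hs (by positivity), show s - (u + t) = (s - u) + -t by ring]
    exact (abs_add_le _ _).trans (by rw [abs_neg, abs_of_nonneg ht])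
  linarith [dist_triangle (d u) (c s) (c (u + t))]

lemma dist_shift_le (hgeo : ∀ x y : X, ∃ m : X, IsMidpoint x y m) (hconv : IsBusemannConvex X)
    (hc : IsGeodesicRay c) (hd : IsGeodesicRay d) {C : ℝ}
    (hC : ∀ u : ℝ, 0 ≤ u → ∃ s : ℝ, 0 ≤ s ∧ dist (d u) (c s) ≤ C)
    {s t : ℝ} (hs : 0 ≤ s) (ht : 0 ≤ t) : dist (d s) (c (s + t)) ≤ dist (d 0) (c t) := by
  have key := le_apply_zero_of_midpoint_convex_of_bddAbove (ψ := fun u => dist (d u) (c (u + t)))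
    (fun u hu => hc.dist_shift_le_add_of_asymptotic hd hC ht hu) ?_ hs
  · simpa using key
  intro u v hu hv
  have hmc := hc.isMidpoint (u := u + t) (v := v + t) (by positivity) (by positivity)
  rw [show (u + t + (v + t)) / 2 = (u + v) / 2 + t by ring] at hmc
  exact hconv.dist_le hgeo (hd.isMidpoint hu hv) hmc

lemma busemann_add_busemann_nonneg (hgeo : ∀ x y : X, ∃ m : X, IsMidpoint x y m)
    (hconv : IsBusemannConvex X) (hc : IsGeodesicRay c) (hd : IsGeodesicRay d) {C : ℝ}
    (hC : ∀ u : ℝ, 0 ≤ u → ∃ s : ℝ, 0 ≤ s ∧ dist (d u) (c s) ≤ C)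
    {βcd βdc : ℝ} (hβcd : Tendsto (fun t : ℝ => dist (d 0) (c t) - t) atTop (nhds βcd))
    (hβdc : Tendsto (fun t : ℝ => dist (c 0) (d t) - t) atTop (nhds βdc)) :
    0 ≤ βcd + βdc := by
  have hlower : ∀ t : ℝ, 0 ≤ t → t - dist (d 0) (c t) ≤ βdc := by
    intro t ht
    refine ge_of_tendsto hβdc ?_
    filter_upwards [eventually_ge_atTop 0] with s hs
    linarith [hc.dist_shift_le hgeo hconv hd hC hs ht, hc.dist_zero (add_nonneg hs ht),
      dist_triangle (c 0) (d s) (c (s + t))]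
  have : -βdc ≤ βcd := by
    refine ge_of_tendsto hβcd ?_
    filter_upwards [eventually_ge_atTop 0] with t ht
    linarith [hlower t ht]
  linarith

end IsGeodesicRay

end Busemann

/-- For asymptotic rays `c`, `d` in a Busemann space with Busemann functions `β_c`, `β_d`,
one has `0 ≤ β_c(d 0) + β_d(c 0) ≤ 2·ρ_ξ(c,d)`, where `ρ_ξ(c,d)` is the infimal distance
between the rays. -/
theorem stmt5 {X : Type*} [MetricSpace X]
    (hgeo : ∀ x y : X, ∃ m : X, dist x m = dist x y / 2 ∧ dist m y = dist x y / 2)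
    (hconv : ∀ x y z m n : X,
      dist x m = dist x y / 2 → dist m y = dist x y / 2 →
      dist x n = dist x z / 2 → dist n z = dist x z / 2 →
      dist m n ≤ dist y z / 2)
    (c d : ℝ → X)
    (hc : ∀ s t : ℝ, 0 ≤ s → 0 ≤ t → dist (c s) (c t) = |s - t|)
    (hd : ∀ s t : ℝ, 0 ≤ s → 0 ≤ t → dist (d s) (d t) = |s - t|)
    (hasymp : ∃ C : ℝ, ∀ t : ℝ, 0 ≤ t →
      (∃ s : ℝ, 0 ≤ s ∧ dist (c t) (d s) ≤ C) ∧ (∃ s : ℝ, 0 ≤ s ∧ dist (d t) (c s) ≤ C))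
    (βcd βdc ρ : ℝ)
    (hβcd : Tendsto (fun t : ℝ => dist (d 0) (c t) - t) atTop (nhds βcd))
    (hβdc : Tendsto (fun t : ℝ => dist (c 0) (d t) - t) atTop (nhds βdc))
    (hρ : ρ = sInf {e : ℝ | ∃ s t : ℝ, 0 ≤ s ∧ 0 ≤ t ∧ e = dist (c s) (d t)}) :
    0 ≤ βcd + βdc ∧ βcd + βdc ≤ 2 * ρ := by
  have hc : IsGeodesicRay c := hc
  have hd : IsGeodesicRay d := hd
  have hbus : IsBusemannConvex X := fun x y z m n hm hn => hconv x y z m n hm.1 hm.2 hn.1 hn.2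
  obtain ⟨C, hC⟩ := hasymp
  refine ⟨hc.busemann_add_busemann_nonneg hgeo hbus hd (fun u hu => (hC u hu).2) hβcd hβdc, ?_⟩
  have hle : (βcd + βdc) / 2 ≤ ρ := by
    rw [hρ]
    refine le_csInf ⟨_, 0, 0, le_rfl, le_rfl, rfl⟩ ?_
    rintro e ⟨s, t, hs, ht, rfl⟩
    linarith [hc.busemann_add_busemann_le hd hβcd hβdc hs ht]
  linarith
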